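/- Let c ∈ (0,1) and let f : (c,1) → ℝ with f′ locally absolutely continuous on (c,1) (so f″ exists a.e.) and f′ ∈ L²(c,1). If the limit L := lim_{x→1⁻}(1−x²)²f″(x) exists, then L = 0. -/

import Mathlib

/-! If `(1 - x²)² f''(x) → L > 0` as `x → 1⁻`, then `f'' ≥ K / (1 - x)²` near `1`, and integrating
once gives `f' ≥ K / (1 - x) - C` there. But `f' ∈ L²(c, 1) ⊆ L¹(c, 1)` on the bounded interval,
while `1 / (1 - x)` is not integrable at `1`. The case `L < 0` follows by passing to `-f'`. -/

open MeasureTheory Set Filter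

noncomputable section

/-- `f` is locally absolutely continuous on the set `s` with a.e. derivative `f'`,
expressed via the fundamental theorem of calculus. -/
def LocACOnI (f f' : ℝ → ℝ) (s : Set ℝ) : Prop :=
  ∀ x ∈ s, ∀ y ∈ s,
    IntervalIntegrable f' volume x y ∧ f y - f x = ∫ t in x..y, f' t

open Topology

theorem LocACOnI.neg {f f' : ℝ → ℝ} {s : Set ℝ} (h : LocACOnI f f' s) :
    LocACOnI (-f) (-f') s := fun x hx y hy =>
  ⟨(h x hx y hy).1.neg, by
    simp only [Pi.neg_apply, intervalIntegral.integral_neg, ← (h x hx y hy).2]; ring⟩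

theorem not_integrableOn_Ioo_inv_one_sub {a : ℝ} (ha : a < 1) :
    ¬ IntegrableOn (fun x => (1 - x)⁻¹) (Ioo a 1) := by
  intro h
  have hsub : IntervalIntegrable (fun x => (x - 1)⁻¹) volume a 1 := by
    rw [intervalIntegrable_iff_integrableOn_Ioo_of_le ha.le]
    have hneg : (fun x : ℝ => (x - 1)⁻¹) = -fun x => (1 - x)⁻¹ :=
      funext fun x => by rw [Pi.neg_apply, ← inv_neg, neg_sub]
    exact hneg ▸ h.neg
  rw [intervalIntegrable_sub_inv_iff] at hsub
  exact hsub.elim ha.ne fun h1 => h1 right_mem_uIcc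

theorem eventually_div_one_sub_sq_le_of_tendsto {g : ℝ → ℝ} {L : ℝ} (hL : 0 < L)
    (hg : Tendsto (fun x => (1 - x ^ 2) ^ 2 * g x) (𝓝[<] 1) (𝓝 L)) :
    ∀ᶠ x in 𝓝[<] 1, L / 8 / (1 - x) ^ 2 ≤ g x := by
  have hpos : ∀ᶠ x in 𝓝[<] (1 : ℝ), x ∈ Ioo 0 1 := Ioo_mem_nhdsLT zero_lt_one
  filter_upwards [hpos, hg.eventually (eventually_gt_nhds (half_lt_self hL))]
    with x ⟨hx0, hx1⟩ hx
  have h1x : 0 < 1 - x := sub_pos.2 hx1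
  have hgx : 0 < g x := pos_of_mul_pos_right (hx.trans' (by positivity)) (by positivity)
  rw [div_le_iff₀ (by positivity)]
  have hsq : (1 - x ^ 2) ^ 2 ≤ 4 * (1 - x) ^ 2 := calc
    (1 - x ^ 2) ^ 2 = (1 - x) ^ 2 * (1 + x) ^ 2 := by ring
    _ ≤ (1 - x) ^ 2 * 2 ^ 2 := by gcongr; linarith
    _ = 4 * (1 - x) ^ 2 := by ring
  nlinarith [mul_le_mul_of_nonneg_right hsq hgx.le]

theorem LocACOnI.mul_inv_one_sub_sub_le {s : Set ℝ} {g g' : ℝ → ℝ} (hg : LocACOnI g g' s)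
    {K x y : ℝ} (hx : x ∈ s) (hy : y ∈ s) (hxy : x ≤ y) (hy1 : y < 1)
    (hbound : ∀ t ∈ Ioo x y, K / (1 - t) ^ 2 ≤ g' t) :
    K * (1 - y)⁻¹ - K * (1 - x)⁻¹ ≤ g y - g x := by
  obtain ⟨hint, hftc⟩ := hg x hx y hy
  have hne : ∀ t ∈ Icc x y, 1 - t ≠ 0 := fun t ht => (sub_pos.2 (ht.2.trans_lt hy1)).ne'
  rw [hftc]
  refine intervalIntegral.sub_le_integral_of_hasDeriv_right_of_le hxy
    (continuousOn_const.mul ((continuousOn_const.sub continuousOn_id).inv₀ hne)) (fun t ht => ?_)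
    ((intervalIntegrable_iff_integrableOn_Icc_of_le hxy).1 hint) hbound
  have hderiv := (((hasDerivAt_id' t).const_sub 1).inv (hne t (Ioo_subset_Icc_self ht))).const_mul K
  rw [neg_neg, mul_one_div] at hderiv
  exact hderiv.hasDerivWithinAt

theorem not_integrableOn_of_div_one_sub_sq_le_deriv {a K : ℝ} (ha : a < 1) (hK : 0 < K)
    {g g' : ℝ → ℝ} (hg : LocACOnI g g' (Ioo a 1))
    (hbound : ∀ᶠ x in 𝓝[<] 1, K / (1 - x) ^ 2 ≤ g' x) :
    ¬ IntegrableOn g (Ioo a 1) := by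
  intro hint
  obtain ⟨b, ⟨hab, hb1⟩, hbsub⟩ :=
    (mem_nhdsLT_iff_exists_mem_Ico_Ioo_subset ha).1 hbound
  obtain ⟨x₀, hbx₀, hx₀1⟩ := exists_between hb1
  have hx₀ : x₀ ∈ Ioo a 1 := ⟨hab.trans_lt hbx₀, hx₀1⟩
  set C := K * (1 - x₀)⁻¹ - g x₀
  have hlower : ∀ y ∈ Ioo x₀ 1, K * (1 - y)⁻¹ ≤ g y + C := fun y hy => by
    have := hg.mul_inv_one_sub_sub_le hx₀ ⟨hx₀.1.trans hy.1, hy.2⟩ hy.1.le hy.2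
      fun t ht => hbsub ⟨hbx₀.trans ht.1, ht.2.trans hy.2⟩
    linarith
  have hsub : Ioo x₀ 1 ⊆ Ioo a 1 := Ioo_subset_Ioo_left hx₀.1.le
  have hmajor : IntegrableOn (fun y => K⁻¹ * (g y + C)) (Ioo x₀ 1) :=
    ((hint.mono_set hsub).add (integrableOn_const measure_Ioo_lt_top.ne)).const_mul K⁻¹
  refine not_integrableOn_Ioo_inv_one_sub hx₀1 <| hmajor.mono' (by fun_prop)
    ((ae_restrict_iff' measurableSet_Ioo).2 (Eventually.of_forall fun y hy => ?_))
  have h1y : 0 < 1 - y := sub_pos.2 hy.2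
  rw [Real.norm_of_nonneg (by positivity), le_inv_mul_iff₀ hK]
  exact hlower y hy

theorem limit_of_sq_second_deriv_eq_zero (c : ℝ) (hc : c ∈ Ioo (0:ℝ) 1)
    (f' f'' : ℝ → ℝ)
    (hf' : LocACOnI f' f'' (Ioo c 1))
    (hL2 : MemLp f' 2 (volume.restrict (Ioo c 1))) (L : ℝ)
    (hL : Tendsto (fun x => (1 - x^2)^2 * f'' x) (nhdsWithin 1 (Ioo c 1)) (nhds L)) :
    L = 0 := by
  rw [nhdsWithin_Ioo_eq_nhdsLT hc.2] at hL
  have : IsFiniteMeasure (volume.restrict (Ioo c 1)) :=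
    isFiniteMeasure_restrict.2 measure_Ioo_lt_top.ne
  have hint : IntegrableOn f' (Ioo c 1) := hL2.integrable one_le_two
  by_contra hL0
  rcases lt_or_gt_of_ne hL0 with hneg | hpos
  · refine not_integrableOn_of_div_one_sub_sq_le_deriv hc.2 (by linarith : 0 < -L / 8) hf'.neg
      ?_ hint.neg
    refine eventually_div_one_sub_sq_le_of_tendsto (neg_pos.2 hneg) ?_
    simpa only [Pi.neg_apply, mul_neg] using hL.neg
  · exact not_integrableOn_of_div_one_sub_sq_le_deriv hc.2 (by linarith : 0 < L / 8) hf'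
      (eventually_div_one_sub_sq_le_of_tendsto hpos hL) hint
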